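/- Let P be a probability measure on a Polish space Ω, X : Ω → E a Borel map to a Polish space E with law μ, (Q_y) the regular conditional distribution of P given X, and let Z : Ω → (0,∞) be measurable with ∫ Z dP = 1. Define dP' = Z dP and let μ' be the law of X under P'. If Z has the form Z(ω) = g(ω) h(X(ω)) for measurable g, h, then for μ'-almost every y, the regular conditional distribution Q'_y of P' given X satisfies dQ'_y = (g / ∫ g dQ_y) dQ_y. -/

import Mathlib

/-!
Under `P` the pair `(X, ω)` has law `μ ⊗ₘ Q`, and tilting by `Z` turns it into the law of
`(X, ω)` under `P'`. Writing `c y = ∫ Z dQ_y`, the tilted measure `(μ ⊗ₘ Q).withDensity Z`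
factors as `(c • μ) ⊗ₘ ((Z / c y) • Q_y)`, whose first marginal is `μ'`; uniqueness of
disintegration then gives `Q'_y = (Z / c y) • Q_y` for `μ'`-a.e. `y`. Since `Q_y` is carried
by the fibre `{X = y}`, there `Z = g * h y`, and the constant `h y` cancels in the normalisation.
-/

open MeasureTheory ProbabilityTheory
open scoped ENNReal

namespace MeasureTheory.Measure

variable {α β Ω : Type*} {mα : MeasurableSpace α} {mβ : MeasurableSpace β} {mΩ : MeasurableSpace Ω}

lemma map_withDensity_comp {μ : Measure α} {f : α → β} (hf : Measurable f) {w : β → ℝ≥0∞}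
    (hw : Measurable w) : (μ.withDensity (w ∘ f)).map f = (μ.map f).withDensity w := by
  ext s hs
  rw [map_apply hf hs, withDensity_apply _ (hf hs), withDensity_apply _ hs,
    setLIntegral_map hs hw hf, Function.comp_def]

lemma map_prodMk_eq_compProd_of_integral_eq {P : Measure Ω} [IsFiniteMeasure P]
    {ν : Measure α} [IsFiniteMeasure ν] {X : Ω → α} (hX : Measurable X)
    (κ : Kernel α Ω) [IsFiniteKernel κ]
    (hdis : ∀ f : Ω → α → ℝ, Measurable (Function.uncurry f) → (∃ C, ∀ ω y, |f ω y| ≤ C) →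
      ∫ ω, f ω (X ω) ∂P = ∫ y, ∫ ω, f ω y ∂(κ y) ∂ν) :
    P.map (fun ω => (X ω, ω)) = ν ⊗ₘ κ := by
  have hT : Measurable fun ω => (X ω, ω) := hX.prodMk measurable_id
  ext s hs
  have hindicator := hdis (fun ω y => s.indicator 1 (y, ω))
    ((measurable_const.indicator hs).comp measurable_swap)
    ⟨1, fun ω y => by by_cases h : (y, ω) ∈ s <;> simp [h]⟩
  rwa [← integral_map hT.aemeasurable (by fun_prop), integral_indicator_one hs,
    ← integral_compProd ((integrable_const 1).indicator hs), integral_indicator_one hs,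
    measureReal_eq_measureReal_iff] at hindicator

lemma ae_ae_eq_of_map_prodMk_eq_compProd [MeasurableEq α] {P : Measure Ω}
    {ν : Measure α} [SFinite ν] {X : Ω → α} (hX : Measurable X) {κ : Kernel α Ω}
    [IsSFiniteKernel κ] (h : P.map (fun ω => (X ω, ω)) = ν ⊗ₘ κ) :
    ∀ᵐ y ∂ν, ∀ᵐ ω ∂(κ y), X ω = y := by
  have hgraph : MeasurableSet {p : α × Ω | X p.2 = p.1} :=
    measurableSet_eq_fun (hX.comp measurable_snd) measurable_fst
  rw [← ae_compProd_iff hgraph, ← h]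
  exact (ae_map_iff (hX.prodMk measurable_id).aemeasurable hgraph).2 (ae_of_all _ fun _ => rfl)

end MeasureTheory.Measure

namespace ProbabilityTheory.Kernel

variable {α β : Type*} {mα : MeasurableSpace α} {mβ : MeasurableSpace β}
  {κ : Kernel α β} [IsSFiniteKernel κ] {f : α → β → ℝ≥0∞}

/-- The total mass of `κ.normalizedWithDensity f a` is `c⁻¹ * c` with `c = ∫⁻ b, f a b ∂κ a`:
it is `1` when `0 < c < ∞` and `0` otherwise. -/
noncomputable def normalizedWithDensity (κ : Kernel α β) [IsSFiniteKernel κ]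
    (f : α → β → ℝ≥0∞) : Kernel α β :=
  κ.withDensity fun a b => (∫⁻ b', f a b' ∂κ a)⁻¹ * f a b

lemma normalizedWithDensity_apply (hf : Measurable (Function.uncurry f)) (a : α) :
    κ.normalizedWithDensity f a
      = (κ a).withDensity fun b => (∫⁻ b', f a b' ∂κ a)⁻¹ * f a b := by
  refine Kernel.withDensity_apply _ ?_ a
  exact (hf.lintegral_kernel_prod_right.inv.comp measurable_fst).mul hf

lemma normalizedWithDensity_apply_univ (hf : Measurable (Function.uncurry f)) (a : α) :
    κ.normalizedWithDensity f a Set.univ = (∫⁻ b, f a b ∂κ a)⁻¹ * ∫⁻ b, f a b ∂κ a := by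
  rw [normalizedWithDensity_apply hf, withDensity_apply _ MeasurableSet.univ,
    Measure.restrict_univ, lintegral_const_mul _ hf.of_uncurry_left]

lemma isFiniteKernel_normalizedWithDensity (hf : Measurable (Function.uncurry f)) :
    IsFiniteKernel (κ.normalizedWithDensity f) :=
  ⟨⟨1, ENNReal.one_lt_top, fun a => (normalizedWithDensity_apply_univ hf a).trans_le
    (ENNReal.inv_mul_le_one _)⟩⟩

end ProbabilityTheory.Kernel

namespace MeasureTheory.Measure

variable {α β : Type*} {mα : MeasurableSpace α} {mβ : MeasurableSpace β}
  {μ : Measure α} [SFinite μ] {κ : Kernel α β} [IsSFiniteKernel κ] {f : α → β → ℝ≥0∞}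

lemma fst_withDensity_compProd (hf : Measurable (Function.uncurry f)) :
    ((μ ⊗ₘ κ).withDensity (Function.uncurry f)).fst
      = μ.withDensity fun a => ∫⁻ b, f a b ∂κ a := by
  ext s hs
  rw [fst_apply hs, withDensity_apply _ hs, withDensity_apply _ (measurable_fst hs),
    ← Set.prod_univ, setLIntegral_compProd hf hs MeasurableSet.univ]
  simp only [Function.uncurry_apply_pair, restrict_univ]

lemma withDensity_compProd_left {c : α → ℝ≥0∞} (hc : Measurable c) (η : Kernel α β)
    [IsSFiniteKernel η] :
    μ.withDensity c ⊗ₘ η = (μ ⊗ₘ η).withDensity fun p => c p.1 := by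
  ext s hs
  rw [compProd_apply hs, lintegral_withDensity_eq_lintegral_mul _ hc
      (Kernel.measurable_kernel_prodMk_left hs), withDensity_apply _ hs,
    ← lintegral_indicator hs,
    lintegral_compProd (f := s.indicator fun p => c p.1) ((hc.comp measurable_fst).indicator hs)]
  refine lintegral_congr fun a => ?_
  rw [Pi.mul_apply, ← lintegral_indicator_const (measurable_prodMk_left hs)]
  rfl

lemma withDensity_compProd_eq_compProd_normalizedWithDensity
    (hf : Measurable (Function.uncurry f)) (hfin : ∀ᵐ a ∂μ, ∫⁻ b, f a b ∂κ a ≠ ∞) :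
    (μ ⊗ₘ κ).withDensity (Function.uncurry f)
      = μ.withDensity (fun a => ∫⁻ b, f a b ∂κ a) ⊗ₘ κ.normalizedWithDensity f := by
  have hc : Measurable fun a => ∫⁻ b, f a b ∂κ a := hf.lintegral_kernel_prod_right
  have hc_fst : Measurable fun p : α × β => ∫⁻ b, f p.1 b ∂κ p.1 := hc.comp measurable_fst
  have hg : Measurable fun p : α × β => (∫⁻ b', f p.1 b' ∂κ p.1)⁻¹ * f p.1 p.2 :=
    (hc.inv.comp measurable_fst).mul hf
  have : IsFiniteKernel (κ.withDensity fun a b => (∫⁻ b', f a b' ∂κ a)⁻¹ * f a b) :=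
    Kernel.isFiniteKernel_normalizedWithDensity hf
  rw [Kernel.normalizedWithDensity, withDensity_compProd_left hc, compProd_withDensity hg,
    ← withDensity_mul _ hg hc_fst]
  refine withDensity_congr_ae (ae_compProd_of_ae_ae (measurableSet_eq_fun hf (by fun_prop)) ?_)
  filter_upwards [hfin] with a ha
  rcases eq_or_ne (∫⁻ b, f a b ∂κ a) 0 with h0 | h0
  · filter_upwards [(lintegral_eq_zero_iff hf.of_uncurry_left).1 h0] with b hb
    simp [hb]
  · refine ae_of_all _ fun b => ?_
    simp only [Pi.mul_apply, Function.uncurry_apply_pair]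
    rw [mul_comm, ← mul_assoc, ENNReal.mul_inv_cancel h0 ha, one_mul]

end MeasureTheory.Measure

namespace ProbabilityTheory.Kernel

variable {α β : Type*} {mα : MeasurableSpace α} {mβ : MeasurableSpace β}
  {μ : Measure α} [SFinite μ] {κ : Kernel α β} [IsSFiniteKernel κ] {f : α → β → ℝ≥0∞}

lemma ae_eq_normalizedWithDensity_of_withDensity_compProd_eq
    [MeasurableSpace.CountableOrCountablyGenerated α β] {ν : Measure α} [IsFiniteMeasure ν]
    {η : Kernel α β} [IsMarkovKernel η] (hf : Measurable (Function.uncurry f))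
    (h : (μ ⊗ₘ κ).withDensity (Function.uncurry f) = ν ⊗ₘ η) :
    η =ᵐ[ν] κ.normalizedWithDensity f := by
  have hν : ν = μ.withDensity fun a => ∫⁻ b, f a b ∂κ a := by
    rw [← Measure.fst_compProd ν η, ← h, Measure.fst_withDensity_compProd hf]
  have hfin : ∀ᵐ a ∂μ, ∫⁻ b, f a b ∂κ a ≠ ∞ := by
    refine (ae_lt_top hf.lintegral_kernel_prod_right ?_).mono fun _ => ne_of_lt
    rw [← setLIntegral_univ, ← withDensity_apply _ MeasurableSet.univ, ← hν]
    exact measure_ne_top ν _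
  have := isFiniteKernel_normalizedWithDensity (κ := κ) hf
  refine ae_eq_of_compProd_eq ?_
  rw [← h, Measure.withDensity_compProd_eq_compProd_normalizedWithDensity hf hfin, ← hν]

end ProbabilityTheory.Kernel

namespace MeasureTheory

lemma withDensity_ofReal_div_integral_of_ae_eq_mul_const {α : Type*} {mα : MeasurableSpace α}
    {ν : Measure α} {Z g : α → ℝ} {t : ℝ} (hZ : 0 ≤ᵐ[ν] Z) (hZm : AEStronglyMeasurable Z ν)
    (hZg : ∀ᵐ ω ∂ν, Z ω = g ω * t) (h0 : ∫⁻ ω, ENNReal.ofReal (Z ω) ∂ν ≠ 0)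
    (htop : ∫⁻ ω, ENNReal.ofReal (Z ω) ∂ν ≠ ∞) :
    ν.withDensity (fun ω => ENNReal.ofReal (g ω / ∫ ω', g ω' ∂ν))
      = ν.withDensity fun ω => (∫⁻ ω', ENNReal.ofReal (Z ω') ∂ν)⁻¹ * ENNReal.ofReal (Z ω) := by
  set c := ∫⁻ ω, ENNReal.ofReal (Z ω) ∂ν
  have ht : t ≠ 0 := by
    rintro rfl
    exact h0 ((lintegral_congr_ae (hZg.mono fun ω h => by simp [h])).trans lintegral_zero)
  have hg : ∫ ω, g ω ∂ν = c.toReal / t := by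
    rw [integral_congr_ae (hZg.mono fun ω h => (eq_div_of_mul_eq ht h.symm : g ω = Z ω / t)),
      integral_div, integral_eq_lintegral_of_nonneg_ae hZ hZm]
  refine withDensity_congr_ae (hZg.mono fun ω h => ?_)
  dsimp only
  rw [hg, div_div_eq_mul_div, ← h, ENNReal.ofReal_div_of_pos (ENNReal.toReal_pos h0 htop),
    ENNReal.ofReal_toReal htop, div_eq_mul_inv, mul_comm]

lemma isProbabilityMeasure_withDensity_ofReal {α : Type*} {mα : MeasurableSpace α}
    {P : Measure α} {Z : α → ℝ} (hZ : 0 ≤ᵐ[P] Z) (h1 : ∫ ω, Z ω ∂P = 1) :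
    IsProbabilityMeasure (P.withDensity fun ω => ENNReal.ofReal (Z ω)) := by
  refine ⟨?_⟩
  rw [withDensity_apply _ MeasurableSet.univ, Measure.restrict_univ,
    ← ofReal_integral_eq_lintegral_ofReal (.of_integral_ne_zero (h1 ▸ one_ne_zero)) hZ, h1,
    ENNReal.ofReal_one]

end MeasureTheory

theorem bridge_change_of_measure_general
    {Ω E : Type} [TopologicalSpace Ω] [PolishSpace Ω]
    [MeasurableSpace Ω] [BorelSpace Ω]
    [TopologicalSpace E] [PolishSpace E] [MeasurableSpace E] [BorelSpace E]
    (P : Measure Ω) [IsProbabilityMeasure P]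
    (X : Ω → E) (hX : Measurable X)
    (Q : E → Measure Ω)
    (hQprob : ∀ y, IsProbabilityMeasure (Q y))
    (hQmeas : ∀ B : Set Ω, MeasurableSet B → Measurable fun y => Q y B)
    (hQdis : ∀ f : Ω → E → ℝ, Measurable (Function.uncurry f) →
      (∃ C, ∀ ω y, |f ω y| ≤ C) →
      ∫ ω, f ω (X ω) ∂P = ∫ y, ∫ ω, f ω y ∂(Q y) ∂(Measure.map X P))
    (Z : Ω → ℝ) (hZmeas : Measurable Z) (hZpos : ∀ ω, 0 < Z ω)
    (hZint : ∫ ω, Z ω ∂P = 1)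
    (g : Ω → ℝ) (h : E → ℝ)
    (hfact : ∀ ω, Z ω = g ω * h (X ω))
    (Q' : E → Measure Ω)
    (hQ'prob : ∀ y, IsProbabilityMeasure (Q' y))
    (hQ'meas : ∀ B : Set Ω, MeasurableSet B → Measurable fun y => Q' y B)
    (hQ'dis : ∀ f : Ω → E → ℝ, Measurable (Function.uncurry f) →
      (∃ C, ∀ ω y, |f ω y| ≤ C) →
      ∫ ω, f ω (X ω) ∂(P.withDensity fun ω => ENNReal.ofReal (Z ω)) =
        ∫ y, ∫ ω, f ω y ∂(Q' y)
          ∂(Measure.map X (P.withDensity fun ω => ENNReal.ofReal (Z ω)))) :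
    ∀ᵐ y ∂(Measure.map X (P.withDensity fun ω => ENNReal.ofReal (Z ω))),
      Q' y = (Q y).withDensity
        (fun ω => ENNReal.ofReal (g ω / ∫ ω', g ω' ∂(Q y))) := by
  set W : Ω → ℝ≥0∞ := fun ω => ENNReal.ofReal (Z ω)
  have hW : Measurable fun p : E × Ω => W p.2 := hZmeas.ennreal_ofReal.comp measurable_snd
  have := isProbabilityMeasure_withDensity_ofReal (ae_of_all P fun ω => (hZpos ω).le) hZint
  let κ : Kernel E Ω := ⟨Q, Measure.measurable_of_measurable_coe _ hQmeas⟩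
  let κ' : Kernel E Ω := ⟨Q', Measure.measurable_of_measurable_coe _ hQ'meas⟩
  have : IsMarkovKernel κ := ⟨hQprob⟩
  have : IsMarkovKernel κ' := ⟨hQ'prob⟩
  have hjoint := Measure.map_prodMk_eq_compProd_of_integral_eq hX κ hQdis
  have htilted : (P.map X ⊗ₘ κ).withDensity (fun p => W p.2)
      = (P.withDensity W).map X ⊗ₘ κ' :=
    calc (P.map X ⊗ₘ κ).withDensity (fun p => W p.2)
        = (P.map fun ω => (X ω, ω)).withDensity (fun p => W p.2) := by rw [hjoint]
      _ = (P.withDensity W).map fun ω => (X ω, ω) :=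
        (Measure.map_withDensity_comp (hX.prodMk measurable_id) hW).symm
      _ = (P.withDensity W).map X ⊗ₘ κ' :=
        Measure.map_prodMk_eq_compProd_of_integral_eq hX κ' hQ'dis
  have hac : (P.withDensity W).map X ≪ P.map X :=
    (withDensity_absolutelyContinuous P W).map hX
  filter_upwards
    [Kernel.ae_eq_normalizedWithDensity_of_withDensity_compProd_eq (f := fun _ ω => W ω) hW htilted,
    hac.ae_le (Measure.ae_ae_eq_of_map_prodMk_eq_compProd hX hjoint)] with y hQ'y hfibre
  have hmass : (∫⁻ ω, W ω ∂Q y)⁻¹ * ∫⁻ ω, W ω ∂Q y = 1 := by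
    have hmass' := Kernel.normalizedWithDensity_apply_univ (κ := κ) (f := fun _ ω => W ω) hW y
    rw [← hQ'y] at hmass'
    exact hmass'.symm.trans (hQ'prob y).measure_univ
  have hZg : ∀ᵐ ω ∂Q y, Z ω = g ω * h y := hfibre.mono fun ω hω => hω ▸ hfact ω
  rw [show Q' y = κ' y from rfl, hQ'y, Kernel.normalizedWithDensity_apply hW]
  exact (withDensity_ofReal_div_integral_of_ae_eq_mul_const (ae_of_all _ fun ω => (hZpos ω).le)
    hZmeas.aestronglyMeasurable hZg (fun h0 => by simp [W, h0] at hmass)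
    (fun htop => by simp [W, htop] at hmass)).symm

/-- Change of measure for regular conditional distributions (bridges): if
`dP' = Z dP` with `Z ω = g ω * h (X ω)`, then the conditional laws of `P'`
given `X` are obtained from those of `P` by reweighting with `g`. -/
theorem bridge_change_of_measure
    {Ω E : Type} [TopologicalSpace Ω] [PolishSpace Ω]
    [MeasurableSpace Ω] [BorelSpace Ω]
    [TopologicalSpace E] [PolishSpace E] [MeasurableSpace E] [BorelSpace E]
    (P : Measure Ω) [IsProbabilityMeasure P]
    (X : Ω → E) (hX : Measurable X)
    (Q : E → Measure Ω)
    (hQprob : ∀ y, IsProbabilityMeasure (Q y))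
    (hQmeas : ∀ B : Set Ω, MeasurableSet B → Measurable fun y => Q y B)
    (hQdis : ∀ f : Ω → E → ℝ, Measurable (Function.uncurry f) →
      (∃ C, ∀ ω y, |f ω y| ≤ C) →
      ∫ ω, f ω (X ω) ∂P = ∫ y, ∫ ω, f ω y ∂(Q y) ∂(Measure.map X P))
    (Z : Ω → ℝ) (hZmeas : Measurable Z) (hZpos : ∀ ω, 0 < Z ω)
    (hZint : ∫ ω, Z ω ∂P = 1)
    (g : Ω → ℝ) (h : E → ℝ) (hg : Measurable g) (hh : Measurable h)
    (hfact : ∀ ω, Z ω = g ω * h (X ω))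
    (Q' : E → Measure Ω)
    (hQ'prob : ∀ y, IsProbabilityMeasure (Q' y))
    (hQ'meas : ∀ B : Set Ω, MeasurableSet B → Measurable fun y => Q' y B)
    (hQ'dis : ∀ f : Ω → E → ℝ, Measurable (Function.uncurry f) →
      (∃ C, ∀ ω y, |f ω y| ≤ C) →
      ∫ ω, f ω (X ω) ∂(P.withDensity fun ω => ENNReal.ofReal (Z ω)) =
        ∫ y, ∫ ω, f ω y ∂(Q' y)
          ∂(Measure.map X (P.withDensity fun ω => ENNReal.ofReal (Z ω)))) :
    ∀ᵐ y ∂(Measure.map X (P.withDensity fun ω => ENNReal.ofReal (Z ω))),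
      Q' y = (Q y).withDensity
        (fun ω => ENNReal.ofReal (g ω / ∫ ω', g ω' ∂(Q y))) :=
  bridge_change_of_measure_general P X hX Q hQprob hQmeas hQdis Z hZmeas hZpos hZint g h hfact Q'
    hQ'prob hQ'meas hQ'dis
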